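/- arXiv:2211.12578 — 4 statements merged into one kernel-verified Lean document; each statement's English description precedes it below -/
import Mathlib

section
/- Under the FedAvg setting, the dynamic regret over T rounds satisfies Σ_{t=1}^T F^{(t)}(x^{(t)}) − Σ_{t=1}^T F^{(t)}(x^{(t),*}) ≤ (√T/2)·‖x^{(1)} − x^*‖² + (μ²·√T)/2 + 2·T·Δ_{[1,T]}. -/
/-!
The aggregated FedAvg direction is the gradient of the convex global loss `F⁽ᵗ⁾` at `x⁽ᵗ⁾`
and has norm at most `μ`, so FedAvg is online gradient descent with step `1/√T`.
The standard telescoping argument on `‖x⁽ᵗ⁾ - x*‖²` bounds the static regret against `x*` by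
`(√T/2)‖x⁽¹⁾ - x*‖² + μ²√T/2`. Drift moves every loss by at most `Δ_{[1,T]}` from `F⁽¹⁾`, so the
minimizer of `F⁽¹⁾` is within `2Δ_{[1,T]}` of each round's optimum, which costs `2TΔ_{[1,T]}`
when passing from the static to the dynamic comparator.
-/

open Finset

section FirstOrder

variable {E : Type*} [NormedAddCommGroup E]

lemma ConvexOn.add_apply_sub_le_of_hasFDerivAt [NormedSpace ℝ E] {s : Set E} {f : E → ℝ}
    {f' : E →L[ℝ] ℝ} {x y : E} (hf : ConvexOn ℝ s f) (hx : x ∈ s) (hy : y ∈ s)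
    (hf' : HasFDerivAt f f' x) :
    f x + f' (y - x) ≤ f y := by
  set L : ℝ →ᵃ[ℝ] E := AffineMap.lineMap x y
  have hL : ConvexOn ℝ (L ⁻¹' s) (f ∘ L) := hf.comp_affineMap L
  have hderiv : HasDerivAt (f ∘ L) (f' (y - x)) 0 := by
    have hL0 : L 0 = x := AffineMap.lineMap_apply_zero x y
    exact (hL0 ▸ hf').comp_hasDerivAt 0 AffineMap.hasDerivAt_lineMap
  have hslope := hL.le_slope_of_hasDerivAt (by simpa [L] using hx) (by simpa [L] using hy)
    one_pos hderiv
  simp only [slope_def_field, Function.comp_apply, L, AffineMap.lineMap_apply_one,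
    AffineMap.lineMap_apply_zero, sub_zero, div_one] at hslope
  linarith

variable [InnerProductSpace ℝ E] [CompleteSpace E]

lemma ConvexOn.add_inner_le_of_hasGradientAt {f : E → ℝ} {g x y : E}
    (hf : ConvexOn ℝ Set.univ f) (hg : HasGradientAt f g x) :
    f x + inner ℝ g (y - x) ≤ f y := by
  simpa using hf.add_apply_sub_le_of_hasFDerivAt (Set.mem_univ x) (Set.mem_univ y)
    (hasGradientAt_iff_hasFDerivAt.mp hg)

lemma sum_mul_sub_sum_mul_le_inner_sum_smul {ι : Type*} (s : Finset ι) {w : ι → ℝ}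
    {f : ι → E → ℝ} {g : ι → E} {x y : E} (hw : ∀ i ∈ s, 0 ≤ w i)
    (hf : ∀ i ∈ s, ConvexOn ℝ Set.univ (f i)) (hg : ∀ i ∈ s, HasGradientAt (f i) (g i) x) :
    ∑ i ∈ s, w i * f i x - ∑ i ∈ s, w i * f i y ≤ inner ℝ (∑ i ∈ s, w i • g i) (x - y) := by
  simp only [← sum_sub_distrib, sum_inner, real_inner_smul_left, ← mul_sub]
  refine sum_le_sum fun i hi => mul_le_mul_of_nonneg_left ?_ (hw i hi)
  have h := (hf i hi).add_inner_le_of_hasGradientAt (y := y) (hg i hi)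
  rw [← neg_sub x y, inner_neg_right] at h
  linarith

end FirstOrder

section GradientDescent

variable {E : Type*} [NormedAddCommGroup E] [InnerProductSpace ℝ E]

lemma inner_sub_eq_of_eq_sub_smul {x x' g z : E} {η : ℝ} (hη : η ≠ 0)
    (hx' : x' = x - η • g) :
    inner ℝ g (x - z) = (‖x - z‖ ^ 2 - ‖x' - z‖ ^ 2) / (2 * η) + η / 2 * ‖g‖ ^ 2 := by
  have hsq : ‖x' - z‖ ^ 2 = ‖x - z‖ ^ 2 - 2 * η * inner ℝ g (x - z) + η ^ 2 * ‖g‖ ^ 2 := by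
    rw [hx', sub_right_comm, norm_sub_sq_real, real_inner_smul_right, norm_smul,
      Real.norm_eq_abs, mul_pow, sq_abs, real_inner_comm]
    ring
  rw [hsq]
  field_simp
  ring

theorem sum_sub_le_of_gradient_descent (f : ℕ → E → ℝ) (x g : ℕ → E) (z : E) {η μ : ℝ}
    (hη : 0 < η) {T : ℕ} (hT : 1 ≤ T)
    (hstep : ∀ t ∈ Icc 1 T, x (t + 1) = x t - η • g t)
    (hg : ∀ t ∈ Icc 1 T, ‖g t‖ ≤ μ)
    (hf : ∀ t ∈ Icc 1 T, f t (x t) - f t z ≤ inner ℝ (g t) (x t - z)) :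
    ∑ t ∈ Icc 1 T, (f t (x t) - f t z) ≤ ‖x 1 - z‖ ^ 2 / (2 * η) + T * (η / 2 * μ ^ 2) := by
  set a : ℕ → ℝ := fun t => ‖x t - z‖ ^ 2 / (2 * η)
  have hround : ∀ t ∈ Icc 1 T, f t (x t) - f t z ≤ -(a (t + 1) - a t) + η / 2 * μ ^ 2 := by
    intro t ht
    have hsq : ‖g t‖ ^ 2 ≤ μ ^ 2 := pow_le_pow_left₀ (norm_nonneg _) (hg t ht) 2
    have hinner := inner_sub_eq_of_eq_sub_smul (z := z) hη.ne' (hstep t ht)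
    have : η / 2 * ‖g t‖ ^ 2 ≤ η / 2 * μ ^ 2 := by gcongr
    simp only [a, sub_div] at hinner ⊢
    linarith [hf t ht]
  have htel : ∑ t ∈ Icc 1 T, -(a (t + 1) - a t) = a 1 - a (T + 1) := by
    rw [sum_neg_distrib, sum_Icc_sub hT, neg_sub]
  have ha : 0 ≤ a (T + 1) := by positivity
  calc ∑ t ∈ Icc 1 T, (f t (x t) - f t z)
      ≤ ∑ t ∈ Icc 1 T, (-(a (t + 1) - a t) + η / 2 * μ ^ 2) := sum_le_sum hround
    _ ≤ ‖x 1 - z‖ ^ 2 / (2 * η) + T * (η / 2 * μ ^ 2) := by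
      rw [sum_add_distrib, htel, sum_const, Nat.card_Icc, nsmul_eq_mul]
      simp only [a, add_tsub_cancel_right]
      linarith

end GradientDescent

section Drift

lemma abs_sub_le_sum_Icc_of_abs_sub_pred_le {h Δ : ℕ → ℝ} {T : ℕ}
    (hΔ : ∀ t ∈ Icc 2 T, |h t - h (t - 1)| ≤ Δ t) {t : ℕ} (ht : t ∈ Icc 1 T) :
    |h t - h 1| ≤ ∑ s ∈ Icc 2 T, Δ s := by
  obtain ⟨ht1, htT⟩ := mem_Icc.mp ht
  have hpartial : ∀ t, 1 ≤ t → t ≤ T → |h t - h 1| ≤ ∑ s ∈ Icc 2 t, Δ s := by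
    refine Nat.le_induction (by simp) fun t ht1 ih htT => ?_
    have hstep := hΔ (t + 1) (mem_Icc.mpr ⟨by omega, htT⟩)
    rw [add_tsub_cancel_right] at hstep
    rw [sum_Icc_succ_top (by omega)]
    calc |h (t + 1) - h 1| ≤ |h (t + 1) - h t| + |h t - h 1| := abs_sub_le _ _ _
      _ ≤ Δ (t + 1) + ∑ s ∈ Icc 2 t, Δ s := add_le_add hstep (ih (by omega))
      _ = ∑ s ∈ Icc 2 t, Δ s + Δ (t + 1) := add_comm _ _
  refine (hpartial t ht1 htT).trans (sum_le_sum_of_subset_of_nonneg (Icc_subset_Icc_right htT) ?_)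
  exact fun s hs _ => (abs_nonneg _).trans (hΔ s hs)

lemma sum_le_sum_add_of_minimizer_of_abs_sub_le {E : Type*} {f : ℕ → E → ℝ} {T : ℕ} {D : ℝ}
    {x₁ : E} (hmin : ∀ y, f 1 x₁ ≤ f 1 y) (hdrift : ∀ t ∈ Icc 1 T, ∀ y, |f t y - f 1 y| ≤ D)
    (y : ℕ → E) :
    ∑ t ∈ Icc 1 T, f t x₁ ≤ ∑ t ∈ Icc 1 T, f t (y t) + T * (2 * D) := by
  have hround : ∀ t ∈ Icc 1 T, f t x₁ ≤ f t (y t) + 2 * D := fun t ht => by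
    have h₁ := abs_le.mp (hdrift t ht x₁)
    have h₂ := abs_le.mp (hdrift t ht (y t))
    linarith [hmin (y t)]
  calc ∑ t ∈ Icc 1 T, f t x₁ ≤ ∑ t ∈ Icc 1 T, (f t (y t) + 2 * D) := sum_le_sum hround
    _ = ∑ t ∈ Icc 1 T, f t (y t) + T * (2 * D) := by
      rw [sum_add_distrib, sum_const, Nat.card_Icc, nsmul_eq_mul, add_tsub_cancel_right]

end Drift

theorem fedavg_dynamic_regret_general
    {d : ℕ} {ι : Type*} (N : Finset ι) (T : ℕ) (hT : 1 ≤ T) (μ : ℝ)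
    (F : ℕ → ι → EuclideanSpace ℝ (Fin d) → ℝ)
    (G : ℕ → ι → EuclideanSpace ℝ (Fin d) → EuclideanSpace ℝ (Fin d))
    (p : ℕ → ι → ℝ)
    (Fg : ℕ → EuclideanSpace ℝ (Fin d) → ℝ)
    (Δ : ℕ → ℝ)
    (x xstar : ℕ → EuclideanSpace ℝ (Fin d))
    (xs : EuclideanSpace ℝ (Fin d))
    (hconv : ∀ t ∈ Icc 1 T, ∀ n ∈ N, ConvexOn ℝ Set.univ (F t n))
    (hgrad : ∀ t ∈ Icc 1 T, ∀ n ∈ N, ∀ y, HasGradientAt (F t n) (G t n y) y)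
    (hgradbd : ∀ t ∈ Icc 1 T, ∀ n ∈ N, ∀ y, ‖G t n y‖ ≤ μ)
    (hp0 : ∀ t ∈ Icc 1 T, ∀ n ∈ N, 0 ≤ p t n)
    (hpsum : ∀ t ∈ Icc 1 T, ∑ n ∈ N, p t n = 1)
    (hFg : ∀ t ∈ Icc 1 T, ∀ y, Fg t y = ∑ n ∈ N, p t n * F t n y)
    (hΔ : ∀ t ∈ Icc 2 T, ∀ y, |Fg t y - Fg (t - 1) y| ≤ Δ t)
    (hiter : ∀ t ∈ Icc 1 T,
      x (t + 1) = x t - (1 / Real.sqrt T) • ∑ n ∈ N, p t n • G t n (x t))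
    (hxstar : ∀ t ∈ Icc 1 T, ∀ y, Fg t (xstar t) ≤ Fg t y)
    (hxs : ∀ y, ∑ t ∈ Icc 1 T, Fg t xs ≤ ∑ t ∈ Icc 1 T, Fg t y) :
    ∑ t ∈ Icc 1 T, Fg t (x t) - ∑ t ∈ Icc 1 T, Fg t (xstar t) ≤
      (Real.sqrt T / 2) * ‖x 1 - xs‖ ^ 2 + μ ^ 2 * Real.sqrt T / 2
        + 2 * T * ∑ t ∈ Icc 2 T, Δ t := by
  have h1T : 1 ∈ Icc 1 T := mem_Icc.mpr ⟨le_rfl, hT⟩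
  have hfirst : ∀ t ∈ Icc 1 T, Fg t (x t) - Fg t xs ≤
      inner ℝ (∑ n ∈ N, p t n • G t n (x t)) (x t - xs) := fun t ht => by
    rw [hFg t ht, hFg t ht]
    exact sum_mul_sub_sum_mul_le_inner_sum_smul N (hp0 t ht) (hconv t ht)
      fun n hn => hgrad t ht n hn _
  have hbound : ∀ t ∈ Icc 1 T, ‖∑ n ∈ N, p t n • G t n (x t)‖ ≤ μ := fun t ht => by
    simpa using (convex_closedBall 0 μ).sum_mem (hp0 t ht) (hpsum t ht)
      fun n hn => mem_closedBall_zero_iff.mpr (hgradbd t ht n hn (x t))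
  have hsqrt : 0 < Real.sqrt T := Real.sqrt_pos.mpr (by exact_mod_cast hT)
  have hstatic := sum_sub_le_of_gradient_descent Fg x _ xs (one_div_pos.mpr hsqrt) hT hiter
    hbound hfirst
  have hdynamic := sum_le_sum_add_of_minimizer_of_abs_sub_le (hxstar 1 h1T)
    (fun t ht y => abs_sub_le_sum_Icc_of_abs_sub_pred_le (fun s hs => hΔ s hs y) ht) xstar
  have hinit : ‖x 1 - xs‖ ^ 2 / (2 * (1 / Real.sqrt T)) = Real.sqrt T / 2 * ‖x 1 - xs‖ ^ 2 := by
    field_simp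
  have hrounds : (T : ℝ) * (1 / Real.sqrt T / 2 * μ ^ 2) = μ ^ 2 * Real.sqrt T / 2 := by
    field_simp
    rw [Real.sq_sqrt (Nat.cast_nonneg T)]
  rw [sum_sub_distrib, hinit, hrounds] at hstatic
  linarith [hxs (xstar 1)]

/-- **FedAvg dynamic regret bound.**
Under the FedAvg setting (convex, differentiable local losses with `μ`-bounded gradients,
convex-combination weights summing to one, iterates produced by a gradient step with learning
rate `1/√T` followed by weighted aggregation, and concept drift `Δ_t` bounding the pointwise
change of the global loss between consecutive rounds), the dynamic regret over `T` rounds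
satisfies
`Σ_{t=1}^T F^{(t)}(x^{(t)}) − Σ_{t=1}^T F^{(t)}(x^{(t),*})
  ≤ (√T/2)·‖x^{(1)} − x^*‖² + (μ²·√T)/2 + 2·T·Δ_{[1,T]}`. -/
theorem fedavg_dynamic_regret
    {d : ℕ} {ι : Type*} (N : Finset ι) (T : ℕ) (hT : 1 ≤ T) (μ : ℝ) (hμ : 0 ≤ μ)
    (F : ℕ → ι → EuclideanSpace ℝ (Fin d) → ℝ)
    (G : ℕ → ι → EuclideanSpace ℝ (Fin d) → EuclideanSpace ℝ (Fin d))
    (p : ℕ → ι → ℝ)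
    (Fg : ℕ → EuclideanSpace ℝ (Fin d) → ℝ)
    (Δ : ℕ → ℝ)
    (x xstar : ℕ → EuclideanSpace ℝ (Fin d))
    (xs : EuclideanSpace ℝ (Fin d))
    (hconv : ∀ t ∈ Icc 1 T, ∀ n ∈ N, ConvexOn ℝ Set.univ (F t n))
    (hgrad : ∀ t ∈ Icc 1 T, ∀ n ∈ N, ∀ y, HasGradientAt (F t n) (G t n y) y)
    (hgradbd : ∀ t ∈ Icc 1 T, ∀ n ∈ N, ∀ y, ‖G t n y‖ ≤ μ)
    (hp0 : ∀ t ∈ Icc 1 T, ∀ n ∈ N, 0 ≤ p t n)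
    (hp1 : ∀ t ∈ Icc 1 T, ∀ n ∈ N, p t n ≤ 1)
    (hpsum : ∀ t ∈ Icc 1 T, ∑ n ∈ N, p t n = 1)
    (hFg : ∀ t ∈ Icc 1 T, ∀ y, Fg t y = ∑ n ∈ N, p t n * F t n y)
    (hΔ0 : ∀ t ∈ Icc 2 T, 0 ≤ Δ t)
    (hΔ : ∀ t ∈ Icc 2 T, ∀ y, |Fg t y - Fg (t - 1) y| ≤ Δ t)
    (hiter : ∀ t ∈ Icc 1 T,
      x (t + 1) = x t - (1 / Real.sqrt T) • ∑ n ∈ N, p t n • G t n (x t))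
    (hxstar : ∀ t ∈ Icc 1 T, ∀ y, Fg t (xstar t) ≤ Fg t y)
    (hxs : ∀ y, ∑ t ∈ Icc 1 T, Fg t xs ≤ ∑ t ∈ Icc 1 T, Fg t y) :
    ∑ t ∈ Icc 1 T, Fg t (x t) - ∑ t ∈ Icc 1 T, Fg t (xstar t) ≤
      (Real.sqrt T / 2) * ‖x 1 - xs‖ ^ 2 + μ ^ 2 * Real.sqrt T / 2
        + 2 * T * ∑ t ∈ Icc 2 T, Δ t :=
  fedavg_dynamic_regret_general N T hT μ F G p Fg Δ x xstar xs hconv hgrad hgradbd hp0 hpsum hFg hΔ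
    hiter hxstar hxs
end

section
/- Let F^{(1)},…,F^{(T)} : ℝ^d → ℝ satisfy |F^{(t)}(x) − F^{(t−1)}(x)| ≤ Δ_t for all x ∈ ℝ^d and 2 ≤ t ≤ T, where Δ_t ≥ 0, and set Δ = Σ_{t=2}^T Δ_t. Let x^* be a global minimizer of x ↦ Σ_{t=1}^T F^{(t)}(x) and, for each t, let x^{(t),*} be a global minimizer of F^{(t)}. Then F^{(t)}(x^*) − F^{(t)}(x^{(t),*}) ≤ 2Δ for every t ∈ {1,…,T}, and consequently Σ_{t=1}^T (F^{(t)}(x^*) − F^{(t)}(x^{(t),*})) ≤ 2·T·Δ. -/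
open Finset

lemma drift_pair {d : ℕ} (T : ℕ)
    (F : ℕ → EuclideanSpace ℝ (Fin d) → ℝ) (Δ : ℕ → ℝ)
    (hΔ0 : ∀ t ∈ Icc 2 T, 0 ≤ Δ t)
    (hΔ : ∀ t ∈ Icc 2 T, ∀ x, |F t x - F (t - 1) x| ≤ Δ t)
    {s t : ℕ} (hs : s ∈ Icc 1 T) (ht : t ∈ Icc 1 T) (hst : s ≤ t)
    (x : EuclideanSpace ℝ (Fin d)) :
    |F t x - F s x| ≤ ∑ τ ∈ Icc 2 T, Δ τ := by
  simp only [mem_Icc] at hs ht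
  have key : ∀ u, s ≤ u → u ≤ T → |F u x - F s x| ≤ ∑ τ ∈ Ioc s u, Δ τ := by
    intro u hu
    induction u, hu using Nat.le_induction with
    | base => intro _; simp
    | succ n hn ih =>
      intro hnT
      have hnT' : n ≤ T := Nat.le_of_succ_le hnT
      have hmem : n + 1 ∈ Icc 2 T := by
        simp [mem_Icc]; omega
      have h1 := hΔ (n + 1) hmem x
      simp only [Nat.add_sub_cancel] at h1
      have h2 := ih hnT'
      have hsum : ∑ τ ∈ Ioc s (n + 1), Δ τ = ∑ τ ∈ Ioc s n, Δ τ + Δ (n + 1) := by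
        rw [← Finset.sum_Ioc_succ_top (by omega)]
      calc |F (n + 1) x - F s x| = |(F (n + 1) x - F n x) + (F n x - F s x)| := by ring_nf
        _ ≤ |F (n + 1) x - F n x| + |F n x - F s x| := abs_add_le _ _
        _ ≤ Δ (n + 1) + ∑ τ ∈ Ioc s n, Δ τ := add_le_add h1 h2
        _ = ∑ τ ∈ Ioc s (n + 1), Δ τ := by rw [hsum]; ring
  calc |F t x - F s x| ≤ ∑ τ ∈ Ioc s t, Δ τ := key t hst ht.2
    _ ≤ ∑ τ ∈ Icc 2 T, Δ τ := by
        apply Finset.sum_le_sum_of_subset_of_nonneg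
        · intro τ hτ; simp only [mem_Ioc] at hτ; simp only [mem_Icc]; omega
        · intro τ hτ _; exact hΔ0 τ hτ

/-- **Static-versus-dynamic comparator gap under bounded drift.** -/
theorem drift_comparator_gap
    {d : ℕ} (T : ℕ) (hT : 1 ≤ T)
    (F : ℕ → EuclideanSpace ℝ (Fin d) → ℝ)
    (Δ : ℕ → ℝ)
    (hΔ0 : ∀ t ∈ Icc 2 T, 0 ≤ Δ t)
    (hΔ : ∀ t ∈ Icc 2 T, ∀ x, |F t x - F (t - 1) x| ≤ Δ t)
    (xs : EuclideanSpace ℝ (Fin d))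
    (hxs : ∀ y, ∑ t ∈ Icc 1 T, F t xs ≤ ∑ t ∈ Icc 1 T, F t y)
    (xstar : ℕ → EuclideanSpace ℝ (Fin d))
    (hxstar : ∀ t ∈ Icc 1 T, ∀ y, F t (xstar t) ≤ F t y) :
    (∀ t ∈ Icc 1 T, F t xs - F t (xstar t) ≤ 2 * ∑ τ ∈ Icc 2 T, Δ τ) ∧
      ∑ t ∈ Icc 1 T, (F t xs - F t (xstar t)) ≤ 2 * T * ∑ τ ∈ Icc 2 T, Δ τ := by
  set D := ∑ τ ∈ Icc 2 T, Δ τ with hD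
  have hpair : ∀ s ∈ Icc 1 T, ∀ t ∈ Icc 1 T, ∀ x, |F t x - F s x| ≤ D := by
    intro s hs t ht x
    rcases le_total s t with h | h
    · exact drift_pair T F Δ hΔ0 hΔ hs ht h x
    · rw [abs_sub_comm]; exact drift_pair T F Δ hΔ0 hΔ ht hs h x
  have hcard : (Icc 1 T).card = T := by simp
  have main : ∀ t ∈ Icc 1 T, F t xs - F t (xstar t) ≤ 2 * D := by
    intro t ht
    -- T * F t xs ≤ ∑ F s xs + T * D
    have h1 : (T : ℝ) * F t xs ≤ (∑ s ∈ Icc 1 T, F s xs) + T * D := by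
      have : ∑ s ∈ Icc 1 T, F t xs ≤ ∑ s ∈ Icc 1 T, (F s xs + D) := by
        apply Finset.sum_le_sum
        intro s hs
        have := hpair s hs t ht xs
        have := abs_le.mp this
        linarith [this.1]
      simpa [Finset.sum_add_distrib, hcard, mul_comm] using this
    have h2 : (∑ s ∈ Icc 1 T, F s (xstar t)) ≤ (T : ℝ) * F t (xstar t) + T * D := by
      have : ∑ s ∈ Icc 1 T, F s (xstar t) ≤ ∑ s ∈ Icc 1 T, (F t (xstar t) + D) := by
        apply Finset.sum_le_sum
        intro s hs
        have := hpair t ht s hs (xstar t)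
        have := abs_le.mp this
        linarith [this.2]
      simpa [Finset.sum_add_distrib, hcard, mul_comm] using this
    have h3 := hxs (xstar t)
    have hTpos : (0 : ℝ) < T := by exact_mod_cast hT
    have : (T : ℝ) * F t xs ≤ (T : ℝ) * F t (xstar t) + 2 * (T * D) := by linarith
    nlinarith
  refine ⟨main, ?_⟩
  calc ∑ t ∈ Icc 1 T, (F t xs - F t (xstar t)) ≤ ∑ t ∈ Icc 1 T, (2 * D) :=
        Finset.sum_le_sum main
    _ = 2 * T * D := by rw [Finset.sum_const, hcard]; push_cast; ring
end

section
/- Let F_n : ℝ^d → ℝ, for n in a finite set 𝒩, be convex and differentiable with ‖∇F_n(x)‖ ≤ μ for all x, let p_n ∈ [0,1] satisfy Σ_{n∈𝒩} p_n = 1, and set F = Σ_{n∈𝒩} p_n F_n. Let φ : ℝ^d → ℝ be differentiable and 1-strongly convex, with Bregman divergence B_φ(y; x) = φ(y) − φ(x) − ⟨∇φ(x), y − x⟩, and assume B_φ(u; Σ_i w_i z_i) ≤ Σ_i w_i B_φ(u; z_i) for any points z_i and convex weights w_i. Fix x^{(t)} ∈ ℝ^d and η > 0; for each n let x_n^{(t+1)}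 be a global minimizer over ℝ^d of x ↦ ⟨∇F_n(x^{(t)}), x⟩ + (1/η)·B_φ(x; x^{(t)}), and set x^{(t+1)} = Σ_{n∈𝒩} p_n x_n^{(t+1)}. Then for every u ∈ ℝ^d: F(x^{(t)}) − F(u) ≤ (1/η)·(B_φ(u; x^{(t)}) − B_φ(u; x^{(t+1)})) + (η·μ²)/2. -/
open Finset RealInnerProductSpace

/-!
Each client's update is one mirror-descent step. Its first-order optimality condition
`η ∇F_n(x) = ∇φ(x) − ∇φ(x_n)` turns the linearised regret `⟪∇F_n(x), x − u⟫` into a telescoping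
difference of Bregman divergences plus `⟪∇F_n(x), x − x_n⟫ − B(x_n; x)/η`, and 1-strong convexity
of `φ` together with Young's inequality bounds the latter by `η‖∇F_n(x)‖²/2`. Convexity of `F_n`
bounds `F_n(x) − F_n(u)` by the linearised regret, and averaging with the weights `p_n`, using the
convexity of `B(u; ·)` on the aggregate, gives the claim.
-/

section FirstOrder

variable {E : Type*}

theorem ConvexOn.sub_le_of_hasFDerivAt [NormedAddCommGroup E] [NormedSpace ℝ E] {f : E → ℝ}
    {f' : E →L[ℝ] ℝ} {x : E} (hf : ConvexOn ℝ Set.univ f) (hf' : HasFDerivAt f f' x) (y : E) :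
    f x - f y ≤ f' (x - y) := by
  have hline : HasDerivAt (fun t : ℝ => x + t • (y - x)) (y - x) 0 := by
    simpa using ((hasDerivAt_id (0 : ℝ)).smul_const (y - x)).const_add x
  have hderiv : HasDerivAt (fun t : ℝ => f (x + t • (y - x))) (f' (y - x)) 0 := by
    have hf'' : HasFDerivAt f f' (x + (0 : ℝ) • (y - x)) := by simpa using hf'
    exact hf''.comp_hasDerivAt 0 hline
  have hconv : ConvexOn ℝ Set.univ (fun t : ℝ => f (x + t • (y - x))) := by
    simpa [AffineMap.lineMap_apply, Function.comp_def, add_comm] using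
      hf.comp_affineMap (AffineMap.lineMap x y)
  have hslope := hconv.le_slope_of_hasDerivAt (Set.mem_univ 0) (Set.mem_univ 1) one_pos hderiv
  simp only [slope_def_field, zero_smul, add_zero, one_smul, add_sub_cancel, sub_zero,
    div_one] at hslope
  rw [← neg_sub y x, map_neg]
  linarith

theorem ConvexOn.sub_le_inner_of_hasGradientAt [NormedAddCommGroup E] [InnerProductSpace ℝ E]
    [CompleteSpace E] {f : E → ℝ} {g x : E} (hf : ConvexOn ℝ Set.univ f)
    (hg : HasGradientAt f g x) (y : E) : f x - f y ≤ ⟪g, x - y⟫ := by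
  simpa using hf.sub_le_of_hasFDerivAt hg.hasFDerivAt y

end FirstOrder

theorem real_inner_le_mul_sq_add_sq_div {E : Type*} [NormedAddCommGroup E]
    [InnerProductSpace ℝ E] {η : ℝ} (hη : 0 < η) (g v : E) :
    ⟪g, v⟫ ≤ η * ‖g‖ ^ 2 / 2 + ‖v‖ ^ 2 / (2 * η) := by
  have hsq : ‖g‖ * ‖v‖ ≤ η * ‖g‖ ^ 2 / 2 + ‖v‖ ^ 2 / (2 * η) := by
    rw [← sub_nonneg]
    have : η * ‖g‖ ^ 2 / 2 + ‖v‖ ^ 2 / (2 * η) - ‖g‖ * ‖v‖ = (η * ‖g‖ - ‖v‖) ^ 2 / (2 * η) := by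
      field_simp
      ring
    rw [this]
    positivity
  exact (real_inner_le_norm g v).trans hsq

section Bregman

open InnerProductSpace

variable {E : Type*} [NormedAddCommGroup E] [InnerProductSpace ℝ E]

/-- `bregman φ Gφ y x` is the paper's `B_φ(y; x)`, with `Gφ` standing for `∇φ`. -/
def bregman (φ : E → ℝ) (Gφ : E → E) (y x : E) : ℝ :=
  φ y - φ x - ⟪Gφ x, y - x⟫

def IsMirrorStep (φ : E → ℝ) (Gφ : E → E) (η : ℝ) (g x z : E) : Prop :=
  ∀ y, ⟪g, z⟫ + (1 / η) * bregman φ Gφ z x ≤ ⟪g, y⟫ + (1 / η) * bregman φ Gφ y x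

variable {φ : E → ℝ} {Gφ : E → E}

theorem bregman_three_point (x z u : E) :
    ⟪Gφ x - Gφ z, z - u⟫ = bregman φ Gφ u x - bregman φ Gφ u z - bregman φ Gφ z x := by
  simp only [bregman, inner_sub_left, inner_sub_right]
  ring

theorem half_mul_sq_norm_sub_le_bregman {y x : E}
    (hφ : φ x + ⟪Gφ x, y - x⟫ + (1 / 2) * ‖y - x‖ ^ 2 ≤ φ y) :
    (1 / 2) * ‖y - x‖ ^ 2 ≤ bregman φ Gφ y x := by
  unfold bregman
  linarith

variable [CompleteSpace E]

theorem hasGradientAt_bregman_left {y : E} (hφ : HasGradientAt φ (Gφ y) y) (x : E) :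
    HasGradientAt (fun y => bregman φ Gφ y x) (Gφ y - Gφ x) y := by
  rw [hasGradientAt_iff_hasFDerivAt, map_sub]
  show HasFDerivAt (fun y => φ y - φ x - ⟪Gφ x, y - x⟫) _ y
  have hlin : HasFDerivAt (fun y : E => ⟪Gφ x, y - x⟫) (toDual ℝ E (Gφ x)) y := by
    have : (fun y : E => ⟪Gφ x, y - x⟫) = fun y => toDual ℝ E (Gφ x) y - ⟪Gφ x, x⟫ := by
      ext y
      simp [inner_sub_right]
    rw [this]
    exact (toDual ℝ E (Gφ x)).hasFDerivAt.sub_const _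
  exact (hφ.hasFDerivAt.sub_const (φ x)).sub hlin

theorem IsMirrorStep.smul_eq {η : ℝ} {g x z : E} (hstep : IsMirrorStep φ Gφ η g x z)
    (hη : 0 < η) (hφ : HasGradientAt φ (Gφ z) z) : η • g = Gφ x - Gφ z := by
  have hgrad : HasGradientAt (fun y => ⟪g, y⟫ + (1 / η) * bregman φ Gφ y x)
      (g + (1 / η) • (Gφ z - Gφ x)) z := by
    rw [hasGradientAt_iff_hasFDerivAt, map_add, map_smul]
    have hinner : HasFDerivAt (fun y : E => ⟪g, y⟫) (toDual ℝ E g) z :=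
      (toDual ℝ E g).hasFDerivAt
    exact hinner.add ((hasGradientAt_bregman_left hφ x).hasFDerivAt.const_mul (1 / η))
  have hmin : IsLocalMin (fun y => ⟪g, y⟫ + (1 / η) * bregman φ Gφ y x) z :=
    Filter.Eventually.of_forall hstep
  have hzero : g + (1 / η) • (Gφ z - Gφ x) = 0 := by
    apply (toDual ℝ E).injective
    simpa using hmin.hasFDerivAt_eq_zero hgrad.hasFDerivAt
  have := congrArg (η • ·) hzero
  simp only [smul_add, smul_smul, mul_one_div_cancel hη.ne', one_smul, smul_zero] at this
  rw [← sub_eq_zero, sub_sub_eq_add_sub, add_sub_assoc, this]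

theorem IsMirrorStep.inner_sub_le {η : ℝ} {g x z : E} (hstep : IsMirrorStep φ Gφ η g x z)
    (hη : 0 < η) (hφ : HasGradientAt φ (Gφ z) z)
    (hsc : φ x + ⟪Gφ x, z - x⟫ + (1 / 2) * ‖z - x‖ ^ 2 ≤ φ z) (u : E) :
    ⟪g, x - u⟫ ≤ (1 / η) * (bregman φ Gφ u x - bregman φ Gφ u z) + η * ‖g‖ ^ 2 / 2 := by
  have hg : g = (1 / η) • (Gφ x - Gφ z) := by
    rw [← hstep.smul_eq hη hφ, smul_smul, one_div_mul_cancel hη.ne', one_smul]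
  have htele : ⟪g, z - u⟫ =
      (1 / η) * (bregman φ Gφ u x - bregman φ Gφ u z - bregman φ Gφ z x) := by
    rw [hg, real_inner_smul_left, bregman_three_point]
  have hyoung : ⟪g, x - z⟫ ≤ η * ‖g‖ ^ 2 / 2 + (1 / η) * bregman φ Gφ z x := by
    have hB := half_mul_sq_norm_sub_le_bregman hsc
    have : ‖x - z‖ ^ 2 / (2 * η) ≤ (1 / η) * bregman φ Gφ z x := by
      rw [norm_sub_rev, div_le_iff₀ (by positivity)]
      nlinarith [one_div_mul_cancel hη.ne']
    linarith [real_inner_le_mul_sq_add_sq_div hη g (x - z)]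
  have hsplit : ⟪g, x - u⟫ = ⟪g, x - z⟫ + ⟪g, z - u⟫ := by
    rw [← inner_add_right, sub_add_sub_cancel]
  linarith

end Bregman

theorem map_sum_le_of_forall_fin {E ι : Type*} [AddCommMonoid E] [Module ℝ E] (f : E → ℝ)
    (hf : ∀ (j : ℕ) (z : Fin j → E) (w : Fin j → ℝ), (∀ i, 0 ≤ w i) → (∀ i, w i ≤ 1) →
      ∑ i, w i = 1 → f (∑ i, w i • z i) ≤ ∑ i, w i * f (z i))
    (s : Finset ι) (w : ι → ℝ) (z : ι → E) (hw₀ : ∀ i ∈ s, 0 ≤ w i) (hw₁ : ∑ i ∈ s, w i = 1) :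
    f (∑ i ∈ s, w i • z i) ≤ ∑ i ∈ s, w i * f (z i) := by
  have hle : ∀ i ∈ s, w i ≤ 1 := fun i hi => hw₁ ▸ Finset.single_le_sum hw₀ hi
  have := hf s.card (fun i => z (s.equivFin.symm i)) (fun i => w (s.equivFin.symm i))
    (fun i => hw₀ _ (s.equivFin.symm i).2) (fun i => hle _ (s.equivFin.symm i).2)
    (by rw [Equiv.sum_comp s.equivFin.symm (fun i : s => w i), Finset.sum_coe_sort, hw₁])
  rwa [Equiv.sum_comp s.equivFin.symm (fun i : s => w i • z i),
    Equiv.sum_comp s.equivFin.symm (fun i : s => w i * f (z i)),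
    Finset.sum_coe_sort s (fun i => w i • z i),
    Finset.sum_coe_sort s (fun i => w i * f (z i))] at this

theorem fedomd_one_step_general
    {d : ℕ} {ι : Type*} (N : Finset ι) (μ η : ℝ) (hη : 0 < η)
    (F : ι → EuclideanSpace ℝ (Fin d) → ℝ)
    (G : ι → EuclideanSpace ℝ (Fin d) → EuclideanSpace ℝ (Fin d))
    (p : ι → ℝ)
    (hconv : ∀ n ∈ N, ConvexOn ℝ Set.univ (F n))
    (hgrad : ∀ n ∈ N, ∀ y, HasGradientAt (F n) (G n y) y)
    (hgradbd : ∀ n ∈ N, ∀ y, ‖G n y‖ ≤ μ)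
    (hp0 : ∀ n ∈ N, 0 ≤ p n)
    (hpsum : ∑ n ∈ N, p n = 1)
    (φ : EuclideanSpace ℝ (Fin d) → ℝ)
    (Gφ : EuclideanSpace ℝ (Fin d) → EuclideanSpace ℝ (Fin d))
    (hφgrad : ∀ y, HasGradientAt φ (Gφ y) y)
    (hφsc : ∀ y z : EuclideanSpace ℝ (Fin d),
      φ z + ⟪Gφ z, y - z⟫ + (1 / 2) * ‖y - z‖ ^ 2 ≤ φ y)
    (B : EuclideanSpace ℝ (Fin d) → EuclideanSpace ℝ (Fin d) → ℝ)
    (hB : ∀ y z : EuclideanSpace ℝ (Fin d), B y z = φ y - φ z - ⟪Gφ z, y - z⟫)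
    (hBjensen : ∀ (j : ℕ) (z : Fin j → EuclideanSpace ℝ (Fin d)) (w : Fin j → ℝ),
      (∀ i, 0 ≤ w i) → (∀ i, w i ≤ 1) → ∑ i, w i = 1 →
      ∀ u, B u (∑ i, w i • z i) ≤ ∑ i, w i * B u (z i))
    (xt xt1 : EuclideanSpace ℝ (Fin d))
    (xloc : ι → EuclideanSpace ℝ (Fin d))
    (hlocmin : ∀ n ∈ N, ∀ y,
      ⟪G n xt, xloc n⟫ + (1 / η) * B (xloc n) xt ≤ ⟪G n xt, y⟫ + (1 / η) * B y xt)
    (hagg : xt1 = ∑ n ∈ N, p n • xloc n)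
    (u : EuclideanSpace ℝ (Fin d)) :
    (∑ n ∈ N, p n * F n xt) - (∑ n ∈ N, p n * F n u) ≤
      (1 / η) * (B u xt - B u xt1) + η * μ ^ 2 / 2 := by
  obtain rfl : B = bregman φ Gφ := funext₂ hB
  have hnode : ∀ n ∈ N, F n xt - F n u ≤
      (1 / η) * (bregman φ Gφ u xt - bregman φ Gφ u (xloc n)) + η * μ ^ 2 / 2 := by
    intro n hn
    have hμ : η * ‖G n xt‖ ^ 2 ≤ η * μ ^ 2 := by
      gcongr
      exact hgradbd n hn xt
    linarith [(hconv n hn).sub_le_inner_of_hasGradientAt (hgrad n hn xt) u,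
      IsMirrorStep.inner_sub_le (hlocmin n hn) hη (hφgrad _) (hφsc _ _) u]
  have hjensen : bregman φ Gφ u xt1 ≤ ∑ n ∈ N, p n * bregman φ Gφ u (xloc n) :=
    hagg ▸ map_sum_le_of_forall_fin _ (fun j z w h₀ h₁ hs => hBjensen j z w h₀ h₁ hs u)
      N p xloc hp0 hpsum
  have haverage : ∑ n ∈ N, p n * ((1 / η) * (bregman φ Gφ u xt - bregman φ Gφ u (xloc n)) +
      η * μ ^ 2 / 2) = ((1 / η) * bregman φ Gφ u xt + η * μ ^ 2 / 2) * ∑ n ∈ N, p n -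
        (1 / η) * ∑ n ∈ N, p n * bregman φ Gφ u (xloc n) := by
    rw [Finset.mul_sum, Finset.mul_sum, ← Finset.sum_sub_distrib]
    exact Finset.sum_congr rfl fun n _ => by ring
  calc (∑ n ∈ N, p n * F n xt) - (∑ n ∈ N, p n * F n u)
      = ∑ n ∈ N, p n * (F n xt - F n u) := by simp only [mul_sub, Finset.sum_sub_distrib]
    _ ≤ ∑ n ∈ N, p n * ((1 / η) * (bregman φ Gφ u xt - bregman φ Gφ u (xloc n)) +
        η * μ ^ 2 / 2) := Finset.sum_le_sum fun n hn => by gcongr; exacts [hp0 n hn, hnode n hn]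
    _ ≤ (1 / η) * (bregman φ Gφ u xt - bregman φ Gφ u xt1) + η * μ ^ 2 / 2 := by
      rw [haverage, hpsum]
      have := mul_le_mul_of_nonneg_left hjensen (one_div_pos.mpr hη).le
      linarith

/-- **Per-round FedOMD inequality.**
One FedOMD step (local mirror-descent updates with learning rate `η > 0` against the gradients
of convex differentiable losses `F_n` with `μ`-bounded gradients, followed by weighted
aggregation), with a differentiable 1-strongly convex mirror map `φ` whose Bregman divergence
satisfies the averaged convexity assumption, satisfies for every comparator `u`:
`F(x^{(t)}) − F(u) ≤ (1/η)·(B_φ(u; x^{(t)}) − B_φ(u; x^{(t+1)})) + (η·μ²)/2`,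
where `F = Σ_{n∈𝒩} p_n F_n`. -/
theorem fedomd_one_step
    {d : ℕ} {ι : Type*} (N : Finset ι) (μ η : ℝ) (hη : 0 < η)
    (F : ι → EuclideanSpace ℝ (Fin d) → ℝ)
    (G : ι → EuclideanSpace ℝ (Fin d) → EuclideanSpace ℝ (Fin d))
    (p : ι → ℝ)
    (hconv : ∀ n ∈ N, ConvexOn ℝ Set.univ (F n))
    (hgrad : ∀ n ∈ N, ∀ y, HasGradientAt (F n) (G n y) y)
    (hgradbd : ∀ n ∈ N, ∀ y, ‖G n y‖ ≤ μ)
    (hp0 : ∀ n ∈ N, 0 ≤ p n)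
    (hp1 : ∀ n ∈ N, p n ≤ 1)
    (hpsum : ∑ n ∈ N, p n = 1)
    (φ : EuclideanSpace ℝ (Fin d) → ℝ)
    (Gφ : EuclideanSpace ℝ (Fin d) → EuclideanSpace ℝ (Fin d))
    (hφgrad : ∀ y, HasGradientAt φ (Gφ y) y)
    (hφsc : ∀ y z : EuclideanSpace ℝ (Fin d),
      φ z + ⟪Gφ z, y - z⟫ + (1 / 2) * ‖y - z‖ ^ 2 ≤ φ y)
    (B : EuclideanSpace ℝ (Fin d) → EuclideanSpace ℝ (Fin d) → ℝ)
    (hB : ∀ y z : EuclideanSpace ℝ (Fin d), B y z = φ y - φ z - ⟪Gφ z, y - z⟫)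
    (hBjensen : ∀ (j : ℕ) (z : Fin j → EuclideanSpace ℝ (Fin d)) (w : Fin j → ℝ),
      (∀ i, 0 ≤ w i) → (∀ i, w i ≤ 1) → ∑ i, w i = 1 →
      ∀ u, B u (∑ i, w i • z i) ≤ ∑ i, w i * B u (z i))
    (xt xt1 : EuclideanSpace ℝ (Fin d))
    (xloc : ι → EuclideanSpace ℝ (Fin d))
    (hlocmin : ∀ n ∈ N, ∀ y,
      ⟪G n xt, xloc n⟫ + (1 / η) * B (xloc n) xt ≤ ⟪G n xt, y⟫ + (1 / η) * B y xt)
    (hagg : xt1 = ∑ n ∈ N, p n • xloc n)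
    (u : EuclideanSpace ℝ (Fin d)) :
    (∑ n ∈ N, p n * F n xt) - (∑ n ∈ N, p n * F n u) ≤
      (1 / η) * (B u xt - B u xt1) + η * μ ^ 2 / 2 :=
  fedomd_one_step_general N μ η hη F G p hconv hgrad hgradbd hp0 hpsum φ Gφ hφgrad hφsc B hB
    hBjensen xt xt1 xloc hlocmin hagg u
end

section
/- There exists an absolute constant K > 0 with the following property: for all reals c_1, c_2 > 0 and all natural numbers k ≤ m, setting C(t) = min{c_1·√t + c_2, t} and ρ(t) = C(t)/t for positive reals t, one has (ρ(2^k)/ρ(2^m))·C(2^k) ≤ K·( c_1·2^{m/2} + (c_2/c_1)·2^{m/2} + c_2²·2^{−k} ). -/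
set_option maxHeartbeats 1000000 in
/-- Core inequality with abstract square roots. -/
lemma per_term_block_bound_aux (c₁ c₂ a b sa sb : ℝ) (hc₁ : 0 < c₁) (hc₂ : 0 < c₂)
    (ha0 : 0 < a) (hab : a ≤ b)
    (hsa0 : 0 < sa) (hsb0 : 0 < sb) (hsa2 : sa ^ 2 = a) (hsb2 : sb ^ 2 = b) :
    (min (c₁ * sa + c₂) a / a) / (min (c₁ * sb + c₂) b / b) * min (c₁ * sa + c₂) a ≤
      4 * (c₁ * sb + c₂ / c₁ * sb + c₂ ^ 2 * a⁻¹) := by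
  have hb0 : 0 < b := lt_of_lt_of_le ha0 hab
  set Ca := min (c₁ * sa + c₂) a with hCa
  set Cb := min (c₁ * sb + c₂) b with hCb
  have hCa0 : 0 < Ca := lt_min (by positivity) ha0
  have hCb0 : 0 < Cb := lt_min (by positivity) hb0
  have hCaa : Ca ≤ a := min_le_right _ _
  have hCas : Ca ≤ c₁ * sa + c₂ := min_le_left _ _
  have key : Ca / a / (Cb / b) * Ca = Ca ^ 2 * b / (a * Cb) := by
    field_simp
  rw [key]
  have hX : 0 < c₁ * sb := by positivity
  have hY : 0 < c₂ / c₁ * sb := by positivity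
  have hZ : 0 < c₂ ^ 2 * a⁻¹ := by positivity
  rcases le_total b (c₁ * sb + c₂) with h | h
  · -- Case I : Cb = b
    have hCbb : Cb = b := min_eq_right h
    rw [hCbb]
    have heq : Ca ^ 2 * b / (a * b) = Ca ^ 2 / a := by
      field_simp
    rw [heq]
    have hAa : Ca ^ 2 / a ≤ a := by
      rw [div_le_iff₀ ha0]
      nlinarith [hCa0.le]
    rcases le_total b (2 * (c₁ * sb)) with h2 | h2
    · -- b ≤ 2 c₁ sb
      have : a ≤ 4 * (c₁ * sb) := by linarith
      linarith
    · -- c₂ ≥ b/2 ≥ a/2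
      have hc2b : b ≤ 2 * c₂ := by linarith
      have ha2c : a ≤ 2 * c₂ := le_trans hab hc2b
      have : a ≤ 4 * (c₂ ^ 2 * a⁻¹) := by
        rw [show 4 * (c₂ ^ 2 * a⁻¹) = 4 * c₂ ^ 2 / a from by ring, le_div_iff₀ ha0]
        nlinarith
      linarith
  · -- Case II : Cb = c₁ sb + c₂ ≥ c₁ sb
    have hCbb : Cb = c₁ * sb + c₂ := min_eq_left h
    have hCbge : c₁ * sb ≤ Cb := by rw [hCbb]; linarith
    have step1 : Ca ^ 2 * b / (a * Cb) ≤ Ca ^ 2 * b / (a * (c₁ * sb)) := by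
      gcongr
    have heq : Ca ^ 2 * b / (a * (c₁ * sb)) = Ca ^ 2 * sb / (a * c₁) := by
      rw [← hsb2]
      field_simp
    rw [heq] at step1
    rcases le_total c₂ a with h2 | h2
    · -- c₂ ≤ a
      have h1 : Ca ^ 2 ≤ 2 * c₁ ^ 2 * a + 2 * c₂ * a := by
        nlinarith [mul_self_le_mul_self hCa0.le hCas, sq_nonneg (c₁ * sa - c₂),
          mul_le_mul_of_nonneg_left h2 hc₂.le]
      have hA : Ca ^ 2 * sb / (a * c₁) ≤ 2 * (c₁ * sb) + 2 * (c₂ / c₁ * sb) := by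
        rw [div_le_iff₀ (by positivity)]
        have hrw : (2 * (c₁ * sb) + 2 * (c₂ / c₁ * sb)) * (a * c₁)
            = 2 * c₁ ^ 2 * a * sb + 2 * c₂ * a * sb := by
          field_simp
        rw [hrw]
        have h3 := mul_le_mul_of_nonneg_right h1 hsb0.le
        ring_nf at h3 ⊢
        linarith
      linarith
    · -- a ≤ c₂
      have h1 : Ca ^ 2 ≤ a * c₂ := by nlinarith [hCa0.le]
      have hA : Ca ^ 2 * sb / (a * c₁) ≤ c₂ / c₁ * sb := by
        rw [div_le_iff₀ (by positivity)]
        have hrw : c₂ / c₁ * sb * (a * c₁) = c₂ * a * sb := by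
          field_simp
        rw [hrw]
        have h3 := mul_le_mul_of_nonneg_right h1 hsb0.le
        ring_nf at h3 ⊢
        linarith
      linarith

/-- **Per-term bound in the block regret analysis.**
There is an absolute constant `K > 0` such that for all `c₁, c₂ > 0` and all naturals
`k ≤ m`, with `C(t) = min{c₁·√t + c₂, t}` and `ρ(t) = C(t)/t`:
`(ρ(2^k)/ρ(2^m))·C(2^k) ≤ K·(c₁·2^{m/2} + (c₂/c₁)·2^{m/2} + c₂²·2^{−k})`. -/
theorem per_term_block_bound :
    ∃ K : ℝ, 0 < K ∧
      ∀ (c₁ c₂ : ℝ), 0 < c₁ → 0 < c₂ → ∀ (k m : ℕ), k ≤ m →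
        let C : ℝ → ℝ := fun t => min (c₁ * Real.sqrt t + c₂) t
        let ρ : ℝ → ℝ := fun t => C t / t
        ρ ((2 : ℝ) ^ k) / ρ ((2 : ℝ) ^ m) * C ((2 : ℝ) ^ k) ≤
          K * (c₁ * (2 : ℝ) ^ ((m : ℝ) / 2) + c₂ / c₁ * (2 : ℝ) ^ ((m : ℝ) / 2)
            + c₂ ^ 2 * (2 : ℝ) ^ (-(k : ℝ))) := by
  refine ⟨4, by norm_num, ?_⟩
  intro c₁ c₂ hc₁ hc₂ k m hkm C ρ
  simp only [C, ρ]
  have ha0 : (0 : ℝ) < 2 ^ k := by positivity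
  have hb0 : (0 : ℝ) < 2 ^ m := by positivity
  have hab : (2 : ℝ) ^ k ≤ 2 ^ m := pow_le_pow_right₀ (by norm_num) hkm
  have hsbeq : (2 : ℝ) ^ ((m : ℝ) / 2) = Real.sqrt ((2 : ℝ) ^ m) := by
    rw [Real.sqrt_eq_rpow, ← Real.rpow_natCast 2 m,
      ← Real.rpow_mul (by norm_num : (0 : ℝ) ≤ 2)]
    congr 1
    ring
  have hiaeq : (2 : ℝ) ^ (-(k : ℝ)) = ((2 : ℝ) ^ k)⁻¹ := by
    rw [Real.rpow_neg (by norm_num : (0 : ℝ) ≤ 2), Real.rpow_natCast]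
  rw [hsbeq, hiaeq]
  exact per_term_block_bound_aux c₁ c₂ _ _ _ _ hc₁ hc₂ ha0 hab
    (Real.sqrt_pos.mpr ha0) (Real.sqrt_pos.mpr hb0)
    (Real.sq_sqrt ha0.le) (Real.sq_sqrt hb0.le)
end
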